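/- arXiv:2101.05805 — 3 statements merged into one kernel-verified Lean document; each statement's English description precedes it below -/
import Mathlib

section
/- Let α be a partial order and m : α. Let S be the union of all disjunctive initial sets not containing m, and T the intersection of all disjunctive initial sets containing m. Then S and T are disjunctive initial sets, S ⊆ T, m ∈ T \ S, and every disjunctive initial set A of α satisfies A ⊆ S or T ⊆ A. (Hence the total order of disjunctive gaps has a jump at each element of α.) -/
def DisjInit {α : Type*} [PartialOrder α] (A : Set α) : Prop :=
  IsLowerSet A ∧ ∀ a ∈ A, ∀ b, b ∉ A → a < b

lemma DisjInit.chain {α : Type*} [PartialOrder α] {A B : Set α}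
    (hA : DisjInit A) (hB : DisjInit B) : A ⊆ B ∨ B ⊆ A := by
  by_cases h : A ⊆ B
  · exact Or.inl h
  · obtain ⟨a, haA, haB⟩ := Set.not_subset.mp h
    right
    intro b hb
    exact hA.1 (hB.2 b hb a haB).le haA

theorem stmt_13 {α : Type*} [PartialOrder α] (m : α)
    (S T : Set α)
    (hS : S = ⋃₀ {A : Set α | DisjInit A ∧ m ∉ A})
    (hT : T = ⋂₀ {A : Set α | DisjInit A ∧ m ∈ A}) :
    DisjInit S ∧ DisjInit T ∧ S ⊆ T ∧ m ∈ T \ S ∧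
    (∀ A : Set α, DisjInit A → A ⊆ S ∨ T ⊆ A) := by
  subst hS hT
  have hmS : m ∉ ⋃₀ {A : Set α | DisjInit A ∧ m ∉ A} := by
    rintro ⟨A, ⟨hA, hmA⟩, hm⟩; exact hmA hm
  have hmT : m ∈ ⋂₀ {A : Set α | DisjInit A ∧ m ∈ A} := by
    rintro A ⟨hA, hmA⟩; exact hmA
  refine ⟨⟨?_, ?_⟩, ⟨?_, ?_⟩, ?_, ⟨hmT, hmS⟩, ?_⟩
  · intro a b hba ⟨A, hA, haA⟩
    exact ⟨A, hA, hA.1.1 hba haA⟩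
  · rintro a ⟨A, ⟨hA, hmA⟩, haA⟩ b hb
    exact hA.2 a haA b (fun h => hb ⟨A, ⟨hA, hmA⟩, h⟩)
  · intro a b hba ha A hA
    exact hA.1.1 hba (ha A hA)
  · intro a ha b hb
    rw [Set.mem_sInter] at hb
    push_neg at hb
    obtain ⟨A, hAm, hbA⟩ := hb
    exact hAm.1.2 a (ha A hAm) b hbA
  · rintro a ⟨A, hAm, haA⟩ B hBm
    rcases DisjInit.chain hAm.1 hBm.1 with h | h
    · exact h haA
    · exact absurd (h hBm.2) hAm.2
  · intro A hA
    by_cases hm : m ∈ A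
    · exact Or.inr fun a ha => ha A ⟨hA, hm⟩
    · exact Or.inl fun a ha => ⟨A, ⟨hA, hm⟩, ha⟩
end

section
/- Let α be a partial order. Define m ≈ m' when for every disjunctive initial set A of α one has m ∈ A ↔ m' ∈ A, and for m : α let C(m) = {m' | m ≈ m'} be its class. Then the order induced on each class has no disjunctive gaps: there is no subset D of C(m) with D nonempty, C(m) \ D nonempty, and d < e for every d ∈ D and every e ∈ C(m) \ D. -/
theorem stmt_14 {α : Type*} [PartialOrder α] (m : α)
    (C : Set α) (hC : C = {m' | ∀ A : Set α, DisjInit A → (m ∈ A ↔ m' ∈ A)}) :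
    ¬ ∃ D : Set α, D ⊆ C ∧ D.Nonempty ∧ (C \ D).Nonempty ∧
      ∀ d ∈ D, ∀ e ∈ C \ D, d < e := by
  rintro ⟨D, hDC, ⟨d, hdD⟩, ⟨e, heC, heD⟩, hlt⟩
  have hdC : d ∈ C := hDC hdD
  rw [hC] at hdC heC
  -- the two pieces
  set A1 : Set α := {x | ∃ A : Set α, DisjInit A ∧ e ∉ A ∧ x ∈ A} with hA1def
  set S : Set α := {x | ∀ e' ∈ C \ D, x < e'} with hSdef
  have hDS : D ⊆ S := fun d' hd' e' he' => hlt d' hd' e' he'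
  have hA3 : DisjInit (A1 ∪ S) := by
    constructor
    · rintro x y hyx (⟨A, hA, heA, hxA⟩ | hxS)
      · exact Or.inl ⟨A, hA, heA, hA.1 hyx hxA⟩
      · exact Or.inr (fun e' he' => lt_of_le_of_lt hyx (hxS e' he'))
    · rintro a (⟨A, hA, heA, haA⟩ | haS) b hb
      · have hbA : b ∉ A := fun h => hb (Or.inl ⟨A, hA, heA, h⟩)
        exact hA.2 a haA b hbA
      · by_cases hbA2 : ∀ A : Set α, DisjInit A → e ∈ A → b ∈ A
        · -- then b is equivalent to m, so b ∈ C \ D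
          have hbC : b ∈ C := by
            rw [hC]
            intro A hA
            constructor
            · intro hm
              exact hbA2 A hA ((heC A hA).mp hm)
            · intro hbA
              have heA : e ∈ A := by
                by_contra heA
                exact hb (Or.inl ⟨A, hA, heA, hbA⟩)
              exact (heC A hA).mpr heA
          have hbD : b ∉ D := fun h => hb (Or.inr (hDS h))
          exact haS b ⟨hbC, hbD⟩
        · push_neg at hbA2
          obtain ⟨A, hA, heA, hbA⟩ := hbA2
          have heb : e < b := hA.2 e heA b hbA
          exact lt_trans (haS e ⟨hC ▸ heC, heD⟩) heb
  have hdA3 : d ∈ A1 ∪ S := Or.inr (hDS hdD)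
  have heA3 : e ∉ A1 ∪ S := by
    rintro (⟨A, hA, heA, heA'⟩ | heS)
    · exact heA heA'
    · exact lt_irrefl e (heS e ⟨hC ▸ heC, heD⟩)
  have h1 := hdC (A1 ∪ S) hA3
  have h2 := heC (A1 ∪ S) hA3
  exact heA3 (h2.mp (h1.mpr hdA3))
end

section
/- Let α be a partial order. Let I be an initial half-ray of α, i.e., a chain such that every element of α comparable to every element of I belongs to U(I) = {x | i < x for all i ∈ I}. If F ⊆ U(I) is a maximal chain of the suborder induced on U(I), then I ∪ F is a maximal chain of α. -/
theorem stmt_16 {α : Type*} [PartialOrder α] (I : Set α)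
    (hI : IsChain (· < ·) I)
    (hray : ∀ x : α, (∀ i ∈ I, x < i ∨ i < x) → ∀ i ∈ I, i < x)
    (F : Set α) (hFU : F ⊆ {x : α | ∀ i ∈ I, i < x})
    (hF : IsChain (· < ·) F)
    (hFmax : ∀ F' : Set α, F' ⊆ {x : α | ∀ i ∈ I, i < x} →
      IsChain (· < ·) F' → F ⊆ F' → F' = F) :
    IsMaxChain (· < ·) (I ∪ F) := by
  constructor
  · rintro x (hx | hx) y (hy | hy) hxy
    · exact hI hx hy hxy
    · exact Or.inl (hFU hy x hx)
    · exact Or.inr (hFU hx y hy)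
    · exact hF hx hy hxy
  · intro C hC hsub
    refine Set.Subset.antisymm hsub fun x hx => ?_
    by_cases hxI : x ∈ I
    · exact Or.inl hxI
    have hxU : ∀ i ∈ I, i < x := by
      apply hray
      intro i hi
      rcases hC hx (hsub (Or.inl hi)) (fun h => hxI (h ▸ hi)) with h | h
      · exact Or.inl h
      · exact Or.inr h
    right
    have : F ∪ {x} = F := by
      apply hFmax
      · rintro y (hy | rfl)
        · exact hFU hy
        · exact hxU
      · rintro a (ha | rfl) b (hb | rfl) hab
        · exact hF ha hb hab
        · rcases hC (hsub (Or.inr ha)) hx hab with h | h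
          · exact Or.inl h
          · exact Or.inr h
        · rcases hC hx (hsub (Or.inr hb)) hab with h | h
          · exact Or.inl h
          · exact Or.inr h
        · exact absurd rfl hab
      · exact Set.subset_union_left
    rw [← this]; exact Or.inr rfl
end
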